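/- arXiv:1606.07592 — 2 statements merged into one kernel-verified Lean document; each statement's English description precedes it below -/
import Mathlib

section
/- Let S be a ring graded by a group G with R = S_e. Then S is epsilon-strongly graded by G if and only if for every g ∈ G there is an element ε_g ∈ S_g S_{g⁻¹} such that for all s ∈ S_g, ε_g s = s = s ε_{g⁻¹}. -/
/-!
The elements `ε g` are the units of the ideals `S_g S_{g⁻¹}`. If `S` is epsilon-strongly graded,
then `S_g = S_g S_e = (S_g S_{g⁻¹}) S_g`, so the unit of `S_g S_{g⁻¹}` is a left identity on `S_g`,
and symmetrically `S_g = S_g (S_{g⁻¹} S_g)` gives the right identity. Conversely, `ε g` is a left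
identity on `S_g` and a right identity on `S_{g⁻¹}`, hence a unit of `S_g S_{g⁻¹}`, and
`S_g ⊆ (S_g S_{g⁻¹}) S_g` yields `S_g S_h ⊆ (S_g S_{g⁻¹}) S_{gh}`; the reverse inclusion holds in
every graded ring because `S_{g⁻¹} S_{gh} ⊆ S_h`.
-/

open Pointwise

variable {S : Type*} [Ring S] {ι : Type*} [AddGroup ι]

/-- `I` is a unital ideal of the principal component `𝒜 0`. -/
def IsUnitalIdealOfZero (𝒜 : ι → AddSubgroup S) (I : AddSubgroup S) : Prop :=
  I ≤ 𝒜 0 ∧ (∀ r ∈ 𝒜 0, ∀ x ∈ I, r * x ∈ I ∧ x * r ∈ I) ∧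
    ∃ e ∈ I, ∀ x ∈ I, e * x = x ∧ x * e = x

/-- `S` is epsilon-strongly graded by the (additively written) group `ι`:
for each `g`, `𝒜 g * 𝒜 (-g)` is a unital ideal of `𝒜 0` and
`𝒜 g * 𝒜 h = (𝒜 g * 𝒜 (-g)) * 𝒜 (g+h) = 𝒜 (g+h) * (𝒜 (-h) * 𝒜 h)`. -/
def IsEpsilonStronglyGraded (𝒜 : ι → AddSubgroup S) : Prop :=
  (∀ g : ι, IsUnitalIdealOfZero 𝒜 (𝒜 g * 𝒜 (-g))) ∧
    ∀ g h : ι, 𝒜 g * 𝒜 h = (𝒜 g * 𝒜 (-g)) * 𝒜 (g + h) ∧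
      𝒜 g * 𝒜 h = 𝒜 (g + h) * (𝒜 (-h) * 𝒜 h)

namespace AddSubgroup

section NonUnitalNonAssocRing

variable {R : Type*} [NonUnitalNonAssocRing R] {M N M' N' P : AddSubgroup R}

theorem mul_mem_mul {m n : R} (hm : m ∈ M) (hn : n ∈ N) : m * n ∈ M * N :=
  AddSubmonoid.mul_mem_mul hm hn

theorem mul_le : M * N ≤ P ↔ ∀ m ∈ M, ∀ n ∈ N, m * n ∈ P :=
  AddSubmonoid.mul_le

protected theorem mul_induction_on {C : R → Prop} {r : R} (hr : r ∈ M * N)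
    (hm : ∀ m ∈ M, ∀ n ∈ N, C (m * n)) (ha : ∀ x y, C x → C y → C (x + y)) : C r :=
  AddSubmonoid.mul_induction_on hr hm ha

theorem mul_le_mul (hM : M ≤ M') (hN : N ≤ N') : M * N ≤ M' * N' :=
  AddSubmonoid.mul_le_mul hM hN

theorem le_mul_of_mem_of_forall_mul_eq_self_left {e : R} (he : e ∈ P)
    (h : ∀ m ∈ M, e * m = m) : M ≤ P * M := fun m hm =>
  h m hm ▸ mul_mem_mul he hm

theorem le_mul_of_mem_of_forall_mul_eq_self_right {e : R} (he : e ∈ P)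
    (h : ∀ m ∈ M, m * e = m) : M ≤ M * P := fun m hm =>
  h m hm ▸ mul_mem_mul hm he

end NonUnitalNonAssocRing

section NonAssocRing

variable {R : Type*} [NonAssocRing R] {M N : AddSubgroup R}

theorem le_mul_of_one_mem_right (h : (1 : R) ∈ N) : M ≤ M * N := fun m hm => by
  simpa using mul_mem_mul hm h

theorem le_mul_of_one_mem_left (h : (1 : R) ∈ M) : N ≤ M * N := fun n hn => by
  simpa using mul_mem_mul h hn

end NonAssocRing

section NonUnitalRing

variable {R : Type*} [NonUnitalRing R]

protected theorem mul_assoc (M N P : AddSubgroup R) : M * N * P = M * (N * P) :=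
  toAddSubmonoid_injective (mul_assoc M.toAddSubmonoid N.toAddSubmonoid P.toAddSubmonoid)

variable {M N : AddSubgroup R}

theorem mul_eq_self_of_mem_mul_left {e x : R} (h : ∀ m ∈ M, e * m = m) (hx : x ∈ M * N) :
    e * x = x :=
  AddSubgroup.mul_induction_on (C := fun x => e * x = x) hx
    (fun m hm n _ => by rw [← mul_assoc, h m hm])
    (fun x y hx hy => by rw [mul_add, hx, hy])

theorem mul_eq_self_of_mem_mul_right {e x : R} (h : ∀ n ∈ N, n * e = n) (hx : x ∈ M * N) :
    x * e = x :=
  AddSubgroup.mul_induction_on (C := fun x => x * e = x) hx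
    (fun m _ n hn => by rw [mul_assoc, h n hn])
    (fun x y hx hy => by rw [add_mul, hx, hy])

end NonUnitalRing

end AddSubgroup

open AddSubgroup

section GradedMul

variable (𝒜 : ι → AddSubgroup S) [SetLike.GradedMul 𝒜]

theorem grade_mul_grade_le (g h : ι) : 𝒜 g * 𝒜 h ≤ 𝒜 (g + h) :=
  mul_le.2 fun _ ha _ hb => SetLike.mul_mem_graded ha hb

theorem grade_mul_grade_neg_le_zero (g : ι) : 𝒜 g * 𝒜 (-g) ≤ 𝒜 0 := by
  simpa using grade_mul_grade_le 𝒜 g (-g)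

theorem grade_zero_mul_le (g h : ι) : 𝒜 0 * (𝒜 g * 𝒜 h) ≤ 𝒜 g * 𝒜 h := by
  rw [← AddSubgroup.mul_assoc]
  exact mul_le_mul (by simpa using grade_mul_grade_le 𝒜 0 g) le_rfl

theorem mul_grade_zero_le (g h : ι) : 𝒜 g * 𝒜 h * 𝒜 0 ≤ 𝒜 g * 𝒜 h := by
  rw [AddSubgroup.mul_assoc]
  exact mul_le_mul le_rfl (by simpa using grade_mul_grade_le 𝒜 h 0)

theorem grade_mul_grade_neg_mul_le (g h : ι) :
    𝒜 g * 𝒜 (-g) * 𝒜 (g + h) ≤ 𝒜 g * 𝒜 h := by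
  rw [AddSubgroup.mul_assoc]
  exact mul_le_mul le_rfl (by simpa using grade_mul_grade_le 𝒜 (-g) (g + h))

theorem mul_grade_neg_mul_grade_le (g h : ι) :
    𝒜 (g + h) * (𝒜 (-h) * 𝒜 h) ≤ 𝒜 g * 𝒜 h := by
  rw [← AddSubgroup.mul_assoc]
  exact mul_le_mul (by simpa using grade_mul_grade_le 𝒜 (g + h) (-h)) le_rfl

theorem isUnitalIdealOfZero_grade_mul_grade_neg {g : ι} {e : S} (he : e ∈ 𝒜 g * 𝒜 (-g))
    (hl : ∀ s ∈ 𝒜 g, e * s = s) (hr : ∀ s ∈ 𝒜 (-g), s * e = s) :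
    IsUnitalIdealOfZero 𝒜 (𝒜 g * 𝒜 (-g)) :=
  ⟨grade_mul_grade_neg_le_zero 𝒜 g,
    fun _ hr₀ _ hx => ⟨grade_zero_mul_le 𝒜 g (-g) (mul_mem_mul hr₀ hx),
      mul_grade_zero_le 𝒜 g (-g) (mul_mem_mul hx hr₀)⟩,
    e, he, fun _ hx => ⟨mul_eq_self_of_mem_mul_left hl hx, mul_eq_self_of_mem_mul_right hr hx⟩⟩

theorem grade_mul_eq_left_of_mem_of_forall_mul_eq_self {g : ι} {e : S}
    (he : e ∈ 𝒜 g * 𝒜 (-g)) (hl : ∀ s ∈ 𝒜 g, e * s = s) (h : ι) :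
    𝒜 g * 𝒜 h = 𝒜 g * 𝒜 (-g) * 𝒜 (g + h) := by
  refine le_antisymm ?_ (grade_mul_grade_neg_mul_le 𝒜 g h)
  calc 𝒜 g * 𝒜 h ≤ 𝒜 g * 𝒜 (-g) * 𝒜 g * 𝒜 h :=
        mul_le_mul (le_mul_of_mem_of_forall_mul_eq_self_left he hl) le_rfl
    _ = 𝒜 g * 𝒜 (-g) * (𝒜 g * 𝒜 h) := AddSubgroup.mul_assoc _ _ _
    _ ≤ 𝒜 g * 𝒜 (-g) * 𝒜 (g + h) := mul_le_mul le_rfl (grade_mul_grade_le 𝒜 g h)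

theorem grade_mul_eq_right_of_mem_of_forall_mul_eq_self {h : ι} {e : S}
    (he : e ∈ 𝒜 (-h) * 𝒜 h) (hr : ∀ s ∈ 𝒜 h, s * e = s) (g : ι) :
    𝒜 g * 𝒜 h = 𝒜 (g + h) * (𝒜 (-h) * 𝒜 h) := by
  refine le_antisymm ?_ (mul_grade_neg_mul_grade_le 𝒜 g h)
  calc 𝒜 g * 𝒜 h ≤ 𝒜 g * (𝒜 h * (𝒜 (-h) * 𝒜 h)) :=
        mul_le_mul le_rfl (le_mul_of_mem_of_forall_mul_eq_self_right he hr)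
    _ = 𝒜 g * 𝒜 h * (𝒜 (-h) * 𝒜 h) := (AddSubgroup.mul_assoc _ _ _).symm
    _ ≤ 𝒜 (g + h) * (𝒜 (-h) * 𝒜 h) := mul_le_mul (grade_mul_grade_le 𝒜 g h) le_rfl

end GradedMul

namespace IsEpsilonStronglyGraded

variable {𝒜 : ι → AddSubgroup S} [SetLike.GradedOne 𝒜]

theorem grade_le_mul_grade (h𝒜 : IsEpsilonStronglyGraded 𝒜) (g : ι) :
    𝒜 g ≤ 𝒜 g * 𝒜 (-g) * 𝒜 g :=
  calc 𝒜 g ≤ 𝒜 g * 𝒜 0 := le_mul_of_one_mem_right (SetLike.one_mem_graded 𝒜)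
    _ = 𝒜 g * 𝒜 (-g) * 𝒜 g := by rw [(h𝒜.2 g 0).1, add_zero]

theorem grade_le_grade_mul (h𝒜 : IsEpsilonStronglyGraded 𝒜) (g : ι) :
    𝒜 g ≤ 𝒜 g * (𝒜 (-g) * 𝒜 g) :=
  calc 𝒜 g ≤ 𝒜 0 * 𝒜 g := le_mul_of_one_mem_left (SetLike.one_mem_graded 𝒜)
    _ = 𝒜 g * (𝒜 (-g) * 𝒜 g) := by rw [(h𝒜.2 0 g).2, zero_add]

end IsEpsilonStronglyGraded

/-- `S` is epsilon-strongly graded iff for every `g` there is `ε g ∈ S_g S_{g⁻¹}`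
such that `ε g * s = s = s * ε (-g)` for all `s ∈ S_g`. -/
theorem isEpsilonStronglyGraded_iff_exists_epsilon [DecidableEq ι]
    (𝒜 : ι → AddSubgroup S) [GradedRing 𝒜] :
    IsEpsilonStronglyGraded 𝒜 ↔
      ∃ ε : ι → S, ∀ g : ι, ε g ∈ 𝒜 g * 𝒜 (-g) ∧
        ∀ s ∈ 𝒜 g, ε g * s = s ∧ s * ε (-g) = s := by
  constructor
  · intro h𝒜
    choose ε hε hunit using fun g => (h𝒜.1 g).2.2
    have hright : ∀ g, ∀ x ∈ 𝒜 (-g) * 𝒜 g, x * ε (-g) = x := fun g x hx =>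
      (hunit (-g) x (by rwa [neg_neg])).2
    exact ⟨ε, fun g => ⟨hε g, fun s hs =>
      ⟨mul_eq_self_of_mem_mul_left (fun x hx => (hunit g x hx).1) (h𝒜.grade_le_mul_grade g hs),
        mul_eq_self_of_mem_mul_right (hright g) (h𝒜.grade_le_grade_mul g hs)⟩⟩⟩
  · rintro ⟨ε, hε⟩
    have hl : ∀ g, ∀ s ∈ 𝒜 g, ε g * s = s := fun g s hs => ((hε g).2 s hs).1
    have hr : ∀ g, ∀ s ∈ 𝒜 g, s * ε (-g) = s := fun g s hs => ((hε g).2 s hs).2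
    have hr' : ∀ g, ∀ s ∈ 𝒜 (-g), s * ε g = s := fun g s hs => by simpa using hr (-g) s hs
    have hε' : ∀ g, ε (-g) ∈ 𝒜 (-g) * 𝒜 g := fun g => by simpa using (hε (-g)).1
    exact ⟨fun g => isUnitalIdealOfZero_grade_mul_grade_neg 𝒜 (hε g).1 (hl g) (hr' g),
      fun g h => ⟨grade_mul_eq_left_of_mem_of_forall_mul_eq_self 𝒜 (hε g).1 (hl g) h,
        grade_mul_eq_right_of_mem_of_forall_mul_eq_self 𝒜 (hε' h) (hr h) g⟩⟩
end

section
/- Let S be epsilon-strongly graded by a group G with R = S_e and let γ_g be defined as above. Then γ_g restricts to a surjective ring homomorphism Z(R) → Z(R) ε_g satisfying γ_g(r) s = s r for all r ∈ Z(R) and s ∈ S_g, and this further restricts to a ring isomorphism Z(R) ε_{g⁻¹} → Z(R) ε_g. -/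
open Pointwise

variable {S : Type*} [Ring S] {ι : Type*} [AddGroup ι]

/-!
For `r` central in `R` everything rests on two commutation rules: `γ_g(r) s = s r` for
`s ∈ S_g` (move `r` past `v_i s ∈ R` and use `ε_g s = s`) and its mirror `w γ_g(r) = r w`
for `w ∈ S_{g⁻¹}`. The first gives multiplicativity and, applied to `s = x u_j`, centrality of
`γ_g(r)`; the second shows `γ_g(γ_{g⁻¹}(r)) = r ε_g`, hence surjectivity. If `γ_g(r) = 0`, the
first rule gives `S_g r = 0`, so `r ε_{g⁻¹} ∈ r S_{g⁻¹} S_g = S_{g⁻¹} S_g r` vanishes.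
-/

theorem AddSubgroup.exists_fin_sum_mul_of_mem_mul {A B : AddSubgroup S} {x : S}
    (hx : x ∈ A * B) :
    ∃ (n : ℕ) (a b : Fin n → S), (∀ i, a i ∈ A) ∧ (∀ i, b i ∈ B) ∧ ∑ i, a i * b i = x := by
  refine AddSubmonoid.mul_induction_on hx (fun a ha b hb => ?_) fun x y hx hy => ?_
  · exact ⟨1, fun _ => a, fun _ => b, fun _ => ha, fun _ => hb, by simp⟩
  · obtain ⟨n, a, b, ha, hb, rfl⟩ := hx
    obtain ⟨m, c, d, hc, hd, rfl⟩ := hy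
    refine ⟨n + m, Fin.append a c, Fin.append b d, ?_, ?_, ?_⟩
    · simpa [Fin.forall_fin_add] using ⟨ha, hc⟩
    · simpa [Fin.forall_fin_add] using ⟨hb, hd⟩
    · simp [Fin.sum_univ_add]

/-- The paper's `γ_g`, for a decomposition `ε_g = Σ_i u_i v_i` with `u_i ∈ S_g`, `v_i ∈ S_{g⁻¹}`. -/
def gammaMap {n : ℕ} (u v : Fin n → S) (r : S) : S :=
  ∑ i, u i * r * v i

section GammaMap

variable {n : ℕ} {u v : Fin n → S} {e r : S}

theorem gammaMap_one (huv : ∑ i, u i * v i = e) : gammaMap u v 1 = e := by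
  simpa [gammaMap] using huv

theorem gammaMap_mul_eq_self (hve : ∀ i, v i * e = v i) (t : S) :
    gammaMap u v t * e = gammaMap u v t := by
  simp only [gammaMap, Finset.sum_mul, mul_assoc, hve]

theorem gammaMap_mul_right_eq_self {f : S} (hfv : ∀ i, f * v i = v i) (t : S) :
    gammaMap u v (t * f) = gammaMap u v t := by
  simp only [gammaMap, mul_assoc, hfv]

variable {𝒜 : ι → AddSubgroup S} [SetLike.GradedMonoid 𝒜] {g : ι}

theorem gammaMap_mem_zero (hu : ∀ i, u i ∈ 𝒜 g) (hv : ∀ i, v i ∈ 𝒜 (-g)) (hr : r ∈ 𝒜 0) :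
    gammaMap u v r ∈ 𝒜 0 :=
  sum_mem fun i _ => by
    simpa using SetLike.mul_mem_graded (SetLike.mul_mem_graded (hu i) hr) (hv i)

theorem gammaMap_mul_eq_mul (hv : ∀ i, v i ∈ 𝒜 (-g)) (huv : ∑ i, u i * v i = e)
    (he : ∀ s ∈ 𝒜 g, e * s = s) (hr : r ∈ 𝒜 0) (hc : ∀ x ∈ 𝒜 0, r * x = x * r)
    {s : S} (hs : s ∈ 𝒜 g) : gammaMap u v r * s = s * r := by
  have hvs : ∀ i, v i * s ∈ 𝒜 0 := fun i => by
    simpa using SetLike.mul_mem_graded (hv i) hs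
  calc gammaMap u v r * s = ∑ i, u i * (r * (v i * s)) := by
        simp only [gammaMap, Finset.sum_mul, mul_assoc]
    _ = ∑ i, u i * v i * (s * r) := by
        simp only [hc _ (hvs _), mul_assoc]
    _ = s * r := by
        rw [← Finset.sum_mul, huv, he _ (by simpa using SetLike.mul_mem_graded hs hr)]

theorem mul_gammaMap_eq_mul (hu : ∀ i, u i ∈ 𝒜 g) (huv : ∑ i, u i * v i = e)
    (hc : ∀ x ∈ 𝒜 0, r * x = x * r) {w : S} (hw : w ∈ 𝒜 (-g)) (hwe : w * e = w) :
    w * gammaMap u v r = r * w := by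
  have hwu : ∀ i, w * u i ∈ 𝒜 0 := fun i => by
    simpa using SetLike.mul_mem_graded hw (hu i)
  calc w * gammaMap u v r = ∑ i, w * u i * r * v i := by
        simp only [gammaMap, Finset.mul_sum, mul_assoc]
    _ = ∑ i, r * w * (u i * v i) := by
        simp only [← hc _ (hwu _), mul_assoc]
    _ = r * w := by rw [← Finset.mul_sum, huv, mul_assoc, hwe]

theorem gammaMap_mul (hu : ∀ i, u i ∈ 𝒜 g) (hv : ∀ i, v i ∈ 𝒜 (-g))
    (huv : ∑ i, u i * v i = e) (he : ∀ s ∈ 𝒜 g, e * s = s) (hr : r ∈ 𝒜 0)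
    (hc : ∀ x ∈ 𝒜 0, r * x = x * r) (r' : S) :
    gammaMap u v (r * r') = gammaMap u v r * gammaMap u v r' := by
  change ∑ i, u i * (r * r') * v i = gammaMap u v r * ∑ i, u i * r' * v i
  rw [Finset.mul_sum]
  refine (Finset.sum_congr rfl fun j _ => ?_).symm
  rw [← mul_assoc, ← mul_assoc, gammaMap_mul_eq_mul hv huv he hr hc (hu j), mul_assoc (u j)]

theorem gammaMap_commute (hu : ∀ i, u i ∈ 𝒜 g) (hv : ∀ i, v i ∈ 𝒜 (-g))
    (huv : ∑ i, u i * v i = e) (he : ∀ s ∈ 𝒜 g, e * s = s) (he' : ∀ s ∈ 𝒜 (-g), s * e = s)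
    (hr : r ∈ 𝒜 0) (hc : ∀ x ∈ 𝒜 0, r * x = x * r) {x : S} (hx : x ∈ 𝒜 0) :
    gammaMap u v r * x = x * gammaMap u v r := by
  have hvx : ∀ i, v i * x * e = v i * x := fun i =>
    he' _ (by simpa using SetLike.mul_mem_graded (hv i) hx)
  calc gammaMap u v r * x = gammaMap u v r * x * e := by
        simp only [gammaMap, Finset.sum_mul, mul_assoc, hvx]
    _ = ∑ j, gammaMap u v r * (x * u j) * v j := by
        simp only [← huv, Finset.mul_sum, mul_assoc]
    _ = x * gammaMap u v r := by
        have hxu : ∀ j, x * u j ∈ 𝒜 g := fun j => by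
          simpa using SetLike.mul_mem_graded hx (hu j)
        simp only [gammaMap_mul_eq_mul hv huv he hr hc (hxu _)]
        simp only [gammaMap, Finset.mul_sum, mul_assoc]

theorem gammaMap_gammaMap {m : ℕ} {a b : Fin m → S} {e' : S} (hu : ∀ i, u i ∈ 𝒜 (-g))
    (huv : ∑ i, u i * v i = e) (ha : ∀ k, a k ∈ 𝒜 g) (hab : ∑ k, a k * b k = e')
    (hue : ∀ i, u i * e' = u i) (hc : ∀ x ∈ 𝒜 0, r * x = x * r) :
    gammaMap u v (gammaMap a b r) = r * e := by
  change ∑ i, u i * gammaMap a b r * v i = r * e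
  simp only [mul_gammaMap_eq_mul ha hab hc (hu _) (hue _), mul_assoc, ← Finset.mul_sum, huv]

theorem mul_eq_zero_of_forall_mul_eq_zero (hr : ∀ s ∈ 𝒜 (-g), s * r = 0)
    (hc : ∀ x ∈ 𝒜 0, r * x = x * r) {x : S} (hx : x ∈ 𝒜 g * 𝒜 (-g)) : r * x = 0 := by
  refine AddSubmonoid.mul_induction_on hx (fun a ha b hb => ?_) fun x y hx hy => ?_
  · have hab : a * b ∈ 𝒜 0 := by simpa using SetLike.mul_mem_graded (A := 𝒜) ha hb
    rw [hc _ hab, mul_assoc, hr _ hb, mul_zero]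
  · rw [mul_add, hx, hy, add_zero]

end GammaMap

theorem gamma_restriction_general [DecidableEq ι] (𝒜 : ι → AddSubgroup S) [GradedRing 𝒜]
    (ε : ι → S)
    (hmem : ∀ g : ι, ε g ∈ 𝒜 g * 𝒜 (-g))
    (hid : ∀ g : ι, ∀ s ∈ 𝒜 g, ε g * s = s ∧ s * ε (-g) = s)
    (g : ι) {n : ℕ} (u : Fin n → S) (v : Fin n → S)
    (hu : ∀ i, u i ∈ 𝒜 g) (hv : ∀ i, v i ∈ 𝒜 (-g))
    (huv : ∑ i, u i * v i = ε g) :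
    -- γ_g maps Z(R) into Z(R) ε_g
    (∀ r : S, r ∈ 𝒜 0 → (∀ x ∈ 𝒜 0, r * x = x * r) →
      ((∑ i, u i * r * v i) ∈ 𝒜 0 ∧ (∀ x ∈ 𝒜 0, (∑ i, u i * r * v i) * x = x * ∑ i, u i * r * v i) ∧
        (∑ i, u i * r * v i) * ε g = ∑ i, u i * r * v i)) ∧
    -- γ_g is multiplicative on Z(R) and sends 1 to ε g
    (∀ r r' : S, r ∈ 𝒜 0 → (∀ x ∈ 𝒜 0, r * x = x * r) →
      r' ∈ 𝒜 0 → (∀ x ∈ 𝒜 0, r' * x = x * r') →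
      ∑ i, u i * (r * r') * v i = (∑ i, u i * r * v i) * ∑ i, u i * r' * v i) ∧
    (∑ i, u i * (1 : S) * v i = ε g) ∧
    -- surjectivity onto Z(R) ε_g
    (∀ r : S, r ∈ 𝒜 0 → (∀ x ∈ 𝒜 0, r * x = x * r) →
      ∃ r' : S, r' ∈ 𝒜 0 ∧ (∀ x ∈ 𝒜 0, r' * x = x * r') ∧ ∑ i, u i * r' * v i = r * ε g) ∧
    -- the defining relation γ_g(r) s = s r
    (∀ r : S, r ∈ 𝒜 0 → (∀ x ∈ 𝒜 0, r * x = x * r) →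
      ∀ s ∈ 𝒜 g, (∑ i, u i * r * v i) * s = s * r) ∧
    -- injectivity on Z(R) ε_{g⁻¹}
    (∀ r : S, r ∈ 𝒜 0 → (∀ x ∈ 𝒜 0, r * x = x * r) →
      (∑ i, u i * (r * ε (-g)) * v i) = 0 → r * ε (-g) = 0) := by
  have hε : ∀ s ∈ 𝒜 g, ε g * s = s := fun s hs => (hid g s hs).1
  have hε' : ∀ s ∈ 𝒜 (-g), s * ε g = s := fun s hs => by simpa using (hid (-g) s hs).2
  refine ⟨fun r hr hc => ⟨gammaMap_mem_zero hu hv hr,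
      fun x hx => gammaMap_commute hu hv huv hε hε' hr hc hx,
      gammaMap_mul_eq_self (fun i => hε' _ (hv i)) r⟩,
    fun r r' hr hc _ _ => gammaMap_mul hu hv huv hε hr hc r',
    gammaMap_one huv,
    fun r hr hc => ?_,
    fun r hr hc s hs => gammaMap_mul_eq_mul hv huv hε hr hc hs,
    fun r hr hc h0 => ?_⟩
  · obtain ⟨m, a, b, ha, hb, hab⟩ := AddSubgroup.exists_fin_sum_mul_of_mem_mul (hmem (-g))
    have hu' : ∀ i, u i ∈ 𝒜 (-(-g)) := by simpa using hu
    refine ⟨gammaMap a b r, gammaMap_mem_zero ha hb hr, fun x hx => ?_,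
      gammaMap_gammaMap hu' huv ha hab (fun i => (hid g _ (hu i)).2) hc⟩
    exact gammaMap_commute ha hb hab (fun s hs => (hid (-g) s hs).1)
      (fun s hs => (hid g s (by simpa using hs)).2) hr hc hx
  · change gammaMap u v (r * ε (-g)) = 0 at h0
    rw [gammaMap_mul_right_eq_self (fun i => (hid (-g) _ (hv i)).1)] at h0
    refine mul_eq_zero_of_forall_mul_eq_zero (fun s hs => ?_) hc (hmem (-g))
    rw [← gammaMap_mul_eq_mul hv huv hε hr hc (by simpa using hs), h0, zero_mul]

/-- `γ_g` restricts to a surjective ring homomorphism `Z(R) → Z(R) ε_g` satisfying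
`γ_g(r) s = s r` for all `s ∈ S_g`, and further restricts to a ring isomorphism
`Z(R) ε_{g⁻¹} → Z(R) ε_g`. -/
theorem gamma_restriction [DecidableEq ι] (𝒜 : ι → AddSubgroup S) [GradedRing 𝒜]
    (h : IsEpsilonStronglyGraded 𝒜) (ε : ι → S)
    (hmem : ∀ g : ι, ε g ∈ 𝒜 g * 𝒜 (-g))
    (hid : ∀ g : ι, ∀ s ∈ 𝒜 g, ε g * s = s ∧ s * ε (-g) = s)
    (g : ι) {n : ℕ} (u : Fin n → S) (v : Fin n → S)
    (hu : ∀ i, u i ∈ 𝒜 g) (hv : ∀ i, v i ∈ 𝒜 (-g))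
    (huv : ∑ i, u i * v i = ε g) :
    -- γ_g maps Z(R) into Z(R) ε_g
    (∀ r : S, r ∈ 𝒜 0 → (∀ x ∈ 𝒜 0, r * x = x * r) →
      ((∑ i, u i * r * v i) ∈ 𝒜 0 ∧ (∀ x ∈ 𝒜 0, (∑ i, u i * r * v i) * x = x * ∑ i, u i * r * v i) ∧
        (∑ i, u i * r * v i) * ε g = ∑ i, u i * r * v i)) ∧
    -- γ_g is multiplicative on Z(R) and sends 1 to ε g
    (∀ r r' : S, r ∈ 𝒜 0 → (∀ x ∈ 𝒜 0, r * x = x * r) →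
      r' ∈ 𝒜 0 → (∀ x ∈ 𝒜 0, r' * x = x * r') →
      ∑ i, u i * (r * r') * v i = (∑ i, u i * r * v i) * ∑ i, u i * r' * v i) ∧
    (∑ i, u i * (1 : S) * v i = ε g) ∧
    -- surjectivity onto Z(R) ε_g
    (∀ r : S, r ∈ 𝒜 0 → (∀ x ∈ 𝒜 0, r * x = x * r) →
      ∃ r' : S, r' ∈ 𝒜 0 ∧ (∀ x ∈ 𝒜 0, r' * x = x * r') ∧ ∑ i, u i * r' * v i = r * ε g) ∧
    -- the defining relation γ_g(r) s = s r
    (∀ r : S, r ∈ 𝒜 0 → (∀ x ∈ 𝒜 0, r * x = x * r) →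
      ∀ s ∈ 𝒜 g, (∑ i, u i * r * v i) * s = s * r) ∧
    -- injectivity on Z(R) ε_{g⁻¹}
    (∀ r : S, r ∈ 𝒜 0 → (∀ x ∈ 𝒜 0, r * x = x * r) →
      (∑ i, u i * (r * ε (-g)) * v i) = 0 → r * ε (-g) = 0) :=
  gamma_restriction_general 𝒜 ε hmem hid g u v hu hv huv
end
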